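/- Let π σ : ℕ → (Fin n → ℝ) be sequences and β ∈ ℝ such that π m i = β + σ m i for all m : ℕ and i : Fin n. Then for every TDLTL formula φ in positive normal form over dimension n, π ⊨ φ if and only if σ ⊨ φ; that is, similar orbits satisfy exactly the same TDLTL formulas. -/

import Mathlib

/-- Comparison symbol `∼ ∈ {≥, >}`. -/
inductive Cmp where
  | ge : Cmp
  | gt : Cmp

/-- The relation on `ℝ` denoted by a comparison symbol. -/
def Cmp.rel : Cmp → ℝ → ℝ → Prop
  | .ge => (· ≥ ·)
  | .gt => (· > ·)

/-- TDLTL formulas in positive normal form over dimension `n`. -/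
inductive TDLTL (n : ℕ) where
  | top : TDLTL n
  | bot : TDLTL n
  | atom (i j : Fin n) (c : Cmp) (α : ℝ) : TDLTL n
  | natom (i j : Fin n) (c : Cmp) (α : ℝ) : TDLTL n
  | and (φ₁ φ₂ : TDLTL n) : TDLTL n
  | or (φ₁ φ₂ : TDLTL n) : TDLTL n
  | next (φ : TDLTL n) : TDLTL n
  | untl (φ₁ φ₂ : TDLTL n) : TDLTL n
  | release (φ₁ φ₂ : TDLTL n) : TDLTL n

/-- The suffix `π[m..]` of a sequence. -/
def shift {n : ℕ} (π : ℕ → Fin n → ℝ) (m : ℕ) : ℕ → Fin n → ℝ :=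
  fun t => π (m + t)

/-- (Unbounded) TDLTL satisfaction `π ⊨ φ`. -/
def Sat {n : ℕ} : TDLTL n → (ℕ → Fin n → ℝ) → Prop
  | .top, _ => True
  | .bot, _ => False
  | .atom i j c α, π => c.rel (π 0 i - π 0 j) α
  | .natom i j c α, π => ¬ c.rel (π 0 i - π 0 j) α
  | .and φ₁ φ₂, π => Sat φ₁ π ∧ Sat φ₂ π
  | .or φ₁ φ₂, π => Sat φ₁ π ∨ Sat φ₂ π
  | .next φ, π => Sat φ (shift π 1)
  | .untl φ₁ φ₂, π => ∃ j : ℕ, Sat φ₂ (shift π j) ∧ ∀ t < j, Sat φ₁ (shift π t)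
  | .release φ₁ φ₂, π =>
      (∀ j : ℕ, Sat φ₂ (shift π j)) ∨
      (∃ j : ℕ, Sat φ₁ (shift π j) ∧ ∀ t ≤ j, Sat φ₂ (shift π t))

theorem sat_iff_of_sub_eq {n : ℕ} {π σ : ℕ → Fin n → ℝ}
    (h : ∀ m i j, π m i - π m j = σ m i - σ m j) (φ : TDLTL n) : Sat φ π ↔ Sat φ σ := by
  -- `fun m => h (k + m)` is, definitionally, the hypothesis for the suffixes `shift π k`, `shift σ k`.
  induction φ generalizing π σ with
  | top | bot => rfl
  | atom i j c α | natom i j c α => simp only [Sat, h]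
  | and φ₁ φ₂ ih₁ ih₂ => exact and_congr (ih₁ h) (ih₂ h)
  | or φ₁ φ₂ ih₁ ih₂ => exact or_congr (ih₁ h) (ih₂ h)
  | next φ ih => exact ih fun m => h (1 + m)
  | untl φ₁ φ₂ ih₁ ih₂ =>
    exact exists_congr fun j => and_congr (ih₂ fun m => h (j + m))
      (forall₂_congr fun t _ => ih₁ fun m => h (t + m))
  | release φ₁ φ₂ ih₁ ih₂ =>
    exact or_congr (forall_congr' fun j => ih₂ fun m => h (j + m))
      (exists_congr fun j => and_congr (ih₁ fun m => h (j + m))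
        (forall₂_congr fun t _ => ih₂ fun m => h (t + m)))

theorem similar_orbits_sat {n : ℕ} (π σ : ℕ → Fin n → ℝ) (β : ℝ)
    (h : ∀ (m : ℕ) (i : Fin n), π m i = β + σ m i) :
    ∀ φ : TDLTL n, Sat φ π ↔ Sat φ σ :=
  sat_iff_of_sub_eq fun m i j => by rw [h, h]; ring
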